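/- In the reproducing kernel Hilbert space setting, assume sup_{x∈D} K(x,x) < ∞. Then for every m ∈ ℕ, every mapping A : H → V_m, and every f ∈ H: ‖f − A f‖_{L_∞(μ)} ≤ (sup_{x∈D} K_m(x,x))^{1/2} · ‖f − P_m f‖_H + Λ_m · ‖f − A f‖_{L₂(μ)}, where ‖f − P_m f‖_H² = Σ_{k>m} |⟨f, b_k⟩_{L₂(μ)}|²/σ_k². -/

import Mathlib

open MeasureTheory ENNReal

/-- The (inverse) Christoffel function `Λ(V) = sup_{f ∈ V, f ≠ 0} ‖f‖_∞ / ‖f‖_2`. -/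
noncomputable def christoffel {D : Type*} [MeasurableSpace D] (μ : Measure D)
    (V : Submodule ℂ (D → ℂ)) : ℝ≥0∞ :=
  ⨆ f ∈ V, eLpNorm f ⊤ μ / eLpNorm f 2 μ

/-- `V_m = span{b_1, …, b_m}`. -/
noncomputable def Vspan {D : Type*} (b : ℕ → D → ℂ) (m : ℕ) : Submodule ℂ (D → ℂ) :=
  Submodule.span ℂ (b '' Set.Icc 1 m)

/-!
Split `f - A f = (f - P_m f) + (P_m f - A f)`. The tail `f - P_m f = ∑_{k>m} a_k b_k` is bounded
pointwise by Cauchy–Schwarz: `|∑_{k>m} a_k b_k(x)|² ≤ K_m(x,x) · ∑_{k>m} |a_k|²/σ_k²`. The second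
part lies in `V_m`, so its sup norm is at most `Λ_m` times its `L₂` norm, and since the tail is
`L₂`-orthogonal to `V_m`, Pythagoras bounds that `L₂` norm by `‖f - A f‖_{L₂}`. Orthogonality
needs the tail as an element of `L₂`: by orthonormality the series converges in `L₂`, and its
`L₂` sum agrees a.e. with the pointwise sum along an a.e. convergent subsequence.
-/

open scoped InnerProductSpace ComplexConjugate

theorem ENNReal.inner_le_Lp_mul_Lq_tsum {ι : Type*} (f g : ι → ℝ≥0∞) {p q : ℝ}
    (hpq : p.HolderConjugate q) :
    ∑' i, f i * g i ≤ (∑' i, f i ^ p) ^ (1 / p) * (∑' i, g i ^ q) ^ (1 / q) := by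
  rw [ENNReal.tsum_eq_iSup_sum]
  refine iSup_le fun s => (ENNReal.inner_le_Lp_mul_Lq s f g hpq).trans ?_
  have := hpq.pos
  have := hpq.symm.pos
  gcongr <;> exact ENNReal.sum_le_tsum s

theorem tsum_ite_lt_eq_tsum_nat_add {M : Type*} [AddCommMonoid M] [TopologicalSpace M]
    (g : ℕ → M) (m : ℕ) :
    ∑' k, (if m < k then g k else 0) = ∑' n, g (n + (m + 1)) := by
  rw [← (add_left_injective (m + 1)).tsum_eq]
  · exact tsum_congr fun n => if_pos (by omega)
  · intro k hk
    have hmk : m < k := by by_contra h; exact hk (if_neg h)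
    exact ⟨k - (m + 1), by simp only; omega⟩

theorem inner_eq_zero_of_hasSum {𝕜 E ι : Type*} [RCLike 𝕜] [NormedAddCommGroup E]
    [InnerProductSpace 𝕜 E] {v : ι → E} {T : E} (hT : HasSum v T) {u : E}
    (hu : ∀ i, ⟪u, v i⟫_𝕜 = 0) : ⟪u, T⟫_𝕜 = 0 :=
  ((innerSL 𝕜 u).hasSum hT).unique (by simp [hu])

section Weights

variable {ι : Type*} {a : ι → ℂ} {σ : ι → ℝ}

theorem norm_eq_sqrt_div_sq_mul_abs (ha0 : ∀ k, σ k = 0 → a k = 0) (k : ι) :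
    ‖a k‖ = √(if σ k = 0 then 0 else ‖a k‖ ^ 2 / σ k ^ 2) * |σ k| := by
  split_ifs with h
  · simp [ha0 k h]
  · rw [Real.sqrt_div' _ (sq_nonneg _), Real.sqrt_sq (norm_nonneg _), Real.sqrt_sq_eq_abs,
      div_mul_cancel₀ _ (abs_ne_zero.2 h)]

theorem summable_norm_sq_of_summable_div_sq (ha0 : ∀ k, σ k = 0 → a k = 0)
    (hσ : Summable fun k => σ k ^ 2)
    (ha : Summable fun k => if σ k = 0 then 0 else ‖a k‖ ^ 2 / σ k ^ 2) :
    Summable fun k => ‖a k‖ ^ 2 := by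
  refine .of_nonneg_of_le (fun k => sq_nonneg _) (fun k => ?_) (ha.mul_right (∑' j, σ j ^ 2))
  split_ifs with h
  · simp [ha0 k h]
  · calc ‖a k‖ ^ 2 = ‖a k‖ ^ 2 / σ k ^ 2 * σ k ^ 2 := by field_simp
      _ ≤ ‖a k‖ ^ 2 / σ k ^ 2 * ∑' j, σ j ^ 2 := by
        gcongr
        exact hσ.le_tsum k fun j _ => sq_nonneg _

theorem enorm_tsum_mul_le (y : ι → ℂ) (ha0 : ∀ k, σ k = 0 → a k = 0) :
    ‖∑' k, a k * y k‖ₑ ≤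
      (∑' k, ENNReal.ofReal (σ k ^ 2 * ‖y k‖ ^ 2)) ^ (1 / 2 : ℝ) *
        (∑' k, ENNReal.ofReal (if σ k = 0 then 0 else ‖a k‖ ^ 2 / σ k ^ 2)) ^ (1 / 2 : ℝ) := by
  set w : ι → ℝ := fun k => if σ k = 0 then 0 else ‖a k‖ ^ 2 / σ k ^ 2
  have hw : ∀ k, 0 ≤ w k := fun k => by simp only [w]; split_ifs <;> positivity
  have hsq : ∀ x : ℝ, 0 ≤ x → ENNReal.ofReal x ^ (2 : ℝ) = ENNReal.ofReal (x ^ 2) :=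
    fun x hx => by rw [ENNReal.ofReal_rpow_of_nonneg hx zero_le_two, Real.rpow_two]
  have hσy : ∀ k, ENNReal.ofReal (|σ k| * ‖y k‖) ^ (2 : ℝ) =
      ENNReal.ofReal (σ k ^ 2 * ‖y k‖ ^ 2) :=
    fun k => by rw [hsq _ (by positivity), mul_pow, sq_abs]
  have hwk : ∀ k, ENNReal.ofReal √(w k) ^ (2 : ℝ) = ENNReal.ofReal (w k) :=
    fun k => by rw [hsq _ (Real.sqrt_nonneg _), Real.sq_sqrt (hw k)]
  calc ‖∑' k, a k * y k‖ₑ ≤ ∑' k, ‖a k * y k‖ₑ := enorm_tsum_le_tsum_enorm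
    _ = ∑' k, ENNReal.ofReal (|σ k| * ‖y k‖) * ENNReal.ofReal √(w k) := by
      refine tsum_congr fun k => ?_
      rw [← ENNReal.ofReal_mul (by positivity), ← ofReal_norm, norm_mul,
        norm_eq_sqrt_div_sq_mul_abs ha0 k, mul_assoc, mul_comm]
    _ ≤ (∑' k, ENNReal.ofReal (|σ k| * ‖y k‖) ^ (2 : ℝ)) ^ (1 / 2 : ℝ) *
          (∑' k, ENNReal.ofReal √(w k) ^ (2 : ℝ)) ^ (1 / 2 : ℝ) :=
      ENNReal.inner_le_Lp_mul_Lq_tsum _ _ .two_two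
    _ = _ := by simp only [hσy, hwk]; rfl

end Weights

namespace MeasureTheory

variable {D : Type*} [MeasurableSpace D] {μ : Measure D}

theorem Lp.ae_eq_of_hasSum {E ι : Type*} [NormedAddCommGroup E] {p : ℝ≥0∞} [Fact (1 ≤ p)]
    [Countable ι] {F : ι → Lp E p μ} {T : Lp E p μ} (hT : HasSum F T) {g : D → E}
    (hg : ∀ᵐ x ∂μ, HasSum (fun i => F i x) (g x)) : T =ᵐ[μ] g := by
  obtain ⟨ns, hns, hae⟩ := (tendstoInMeasure_of_tendsto_Lp hT).exists_seq_tendsto_ae'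
  have hsum : ∀ᵐ x ∂μ, ∀ s : Finset ι, (∑ i ∈ s, F i : Lp E p μ) x = ∑ i ∈ s, F i x :=
    ae_all_iff.2 fun s => Lp.coeFn_fun_finsetSum s F
  filter_upwards [hae, hg, hsum] with x hx hgx hsx
  simp only [hsx] at hx
  exact tendsto_nhds_unique hx (hgx.comp hns)

theorem memLp_two_of_integral_conj_mul_self_ne_zero {b : D → ℂ}
    (hb : AEStronglyMeasurable b μ) (h : ∫ x, conj (b x) * b x ∂μ ≠ 0) : MemLp b 2 μ := by
  have hint : Integrable (fun x => conj (b x) * b x) μ := by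
    by_contra hc
    exact h (integral_undef hc)
  refine (memLp_two_iff_integrable_sq_norm hb).2 (hint.re.congr (.of_forall fun x => ?_))
  simp [RCLike.conj_mul, ← Complex.ofReal_pow]

theorem MemLp.inner_toLp {f g : D → ℂ} (hf : MemLp f 2 μ) (hg : MemLp g 2 μ) :
    ⟪hf.toLp f, hg.toLp g⟫_ℂ = ∫ x, conj (f x) * g x ∂μ := by
  rw [L2.inner_def]
  refine integral_congr_ae ?_
  filter_upwards [hf.coeFn_toLp, hg.coeFn_toLp] with x hfx hgx
  rw [RCLike.inner_apply, hfx, hgx, mul_comm]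

theorem memLp_of_mem_span {p : ℝ≥0∞} {s : Set (D → ℂ)} (hs : ∀ g ∈ s, MemLp g p μ)
    {u : D → ℂ} (hu : u ∈ Submodule.span ℂ s) : MemLp u p μ := by
  induction hu using Submodule.span_induction with
  | mem g hg => exact hs g hg
  | zero => exact .zero
  | add f g _ _ hf hg => exact hf.add hg
  | smul c f _ hf => exact hf.const_smul c

theorem inner_toLp_eq_zero_of_mem_span {s : Set (D → ℂ)} (hs : ∀ g ∈ s, MemLp g 2 μ)
    {T : Lp ℂ 2 μ} (hT : ∀ g (hg : g ∈ s), ⟪(hs g hg).toLp g, T⟫_ℂ = 0) {u : D → ℂ}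
    (hu : u ∈ Submodule.span ℂ s) (hu2 : MemLp u 2 μ) : ⟪hu2.toLp u, T⟫_ℂ = 0 := by
  induction hu using Submodule.span_induction with
  | mem g hg => exact hT g hg
  | zero => rw [MemLp.toLp_zero, inner_zero_left]
  | add f g hf hg ihf ihg =>
    have hf2 := memLp_of_mem_span hs hf
    have hg2 := memLp_of_mem_span hs hg
    rw [MemLp.toLp_add hf2 hg2, inner_add_left, ihf hf2, ihg hg2, add_zero]
  | smul c f hf ihf =>
    have hf2 := memLp_of_mem_span hs hf
    rw [MemLp.toLp_const_smul c hf2, inner_smul_left, ihf hf2, mul_zero]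

theorem eLpNorm_two_le_eLpNorm_two_add {f g : D → ℂ} (hf : MemLp f 2 μ) (hg : MemLp g 2 μ)
    (h : ⟪hg.toLp g, hf.toLp f⟫_ℂ = 0) : eLpNorm g 2 μ ≤ eLpNorm (f + g) 2 μ := by
  have hpyth := norm_add_sq_eq_norm_sq_add_norm_sq_of_inner_eq_zero _ _ h
  have hle : ‖hg.toLp g‖ ≤ ‖(hf.add hg).toLp (f + g)‖ := by
    rw [MemLp.toLp_add hf hg, add_comm]
    nlinarith [norm_nonneg (hg.toLp g), norm_nonneg (hg.toLp g + hf.toLp f)]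
  rwa [Lp.norm_toLp, Lp.norm_toLp,
    ENNReal.toReal_le_toReal hg.eLpNorm_ne_top (hf.add hg).eLpNorm_ne_top] at hle

end MeasureTheory

section Tail

variable {D : Type*} [MeasurableSpace D] {μ : Measure D} {b : ℕ → D → ℂ} {m : ℕ}

theorem eLpNorm_top_le_christoffel_mul {V : Submodule ℂ (D → ℂ)} {g : D → ℂ} (hgV : g ∈ V)
    (hg : MemLp g 2 μ) : eLpNorm g ⊤ μ ≤ christoffel μ V * eLpNorm g 2 μ := by
  by_cases h0 : eLpNorm g 2 μ = 0
  · rw [eLpNorm_eq_zero_iff hg.1 two_ne_zero] at h0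
    rw [eLpNorm_congr_ae h0, eLpNorm_zero]
    exact zero_le
  calc eLpNorm g ⊤ μ = eLpNorm g ⊤ μ / eLpNorm g 2 μ * eLpNorm g 2 μ :=
        (ENNReal.div_mul_cancel h0 hg.eLpNorm_ne_top).symm
    _ ≤ christoffel μ V * eLpNorm g 2 μ := by
      gcongr
      exact le_iSup₂ (f := fun u (_ : u ∈ V) => eLpNorm u ⊤ μ / eLpNorm u 2 μ) g hgV

theorem exists_memLp_tail_inner_eq_zero (hb : ∀ k, 1 ≤ k → MemLp (b k) 2 μ)
    (hON : ∀ j k, 1 ≤ j → 1 ≤ k →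
      ∫ x, conj (b j x) * b k x ∂μ = if j = k then 1 else 0)
    {c : ℕ → ℂ} (hc : Summable fun n => ‖c n‖ ^ 2) {t : D → ℂ}
    (ht : ∀ x, HasSum (fun n => c n * b (n + (m + 1)) x) (t x)) :
    ∃ ht2 : MemLp t 2 μ, ∀ u (hu : MemLp u 2 μ), u ∈ Vspan b m →
      ⟪hu.toLp u, ht2.toLp t⟫_ℂ = 0 := by
  set e : ℕ → Lp ℂ 2 μ := fun n => (hb (n + (m + 1)) (by omega)).toLp (b (n + (m + 1)))
  have he : Orthonormal ℂ e := orthonormal_iff_ite.2 fun i j => by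
    rw [MemLp.inner_toLp, hON _ _ (by omega) (by omega)]
    simp
  obtain ⟨T, hT⟩ : Summable fun n => c n • e n :=
    (he.orthogonalFamily.summable_iff_norm_sq_summable c).2 hc
  have hTt : T =ᵐ[μ] t := by
    refine Lp.ae_eq_of_hasSum hT ?_
    have hce : ∀ᵐ x ∂μ, ∀ n, (c n • e n : Lp ℂ 2 μ) x = c n * b (n + (m + 1)) x :=
      ae_all_iff.2 fun n => by
        filter_upwards [Lp.coeFn_smul (c n) (e n),
          MemLp.coeFn_toLp (hb (n + (m + 1)) (by omega))] with x hx hex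
        rw [hx, Pi.smul_apply, smul_eq_mul, hex]
    filter_upwards [hce] with x hx
    simpa only [hx] using ht x
  have ht2 : MemLp t 2 μ := (Lp.memLp T).ae_eq hTt
  have hT_eq : ht2.toLp t = T := by
    rw [← Lp.toLp_coeFn T (Lp.memLp T)]
    exact MemLp.toLp_congr _ _ hTt.symm
  refine ⟨ht2, fun u hu huV => ?_⟩
  rw [hT_eq]
  have hs : ∀ g ∈ b '' Set.Icc 1 m, MemLp g 2 μ := by
    rintro _ ⟨k, hk, rfl⟩
    exact hb k hk.1
  refine inner_toLp_eq_zero_of_mem_span hs ?_ huV hu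
  rintro _ ⟨k, ⟨hk1, hkm⟩, rfl⟩
  refine inner_eq_zero_of_hasSum hT fun n => ?_
  rw [inner_smul_right, MemLp.inner_toLp, hON _ _ hk1 (by omega), if_neg (by omega), mul_zero]

theorem eLpNorm_top_tail_le {σ : ℕ → ℝ} {a : ℕ → ℂ} (ha0 : ∀ k, σ k = 0 → a k = 0)
    (ha : Summable fun k => if σ k = 0 then 0 else ‖a k‖ ^ 2 / σ k ^ 2) {t : D → ℂ}
    (ht : ∀ x, HasSum (fun n => a (n + (m + 1)) * b (n + (m + 1)) x) (t x)) :
    eLpNorm t ⊤ μ ≤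
      (⨆ x : D, ∑' k, if m < k then ENNReal.ofReal (σ k ^ 2 * ‖b k x‖ ^ 2) else 0)
          ^ ((1:ℝ)/2) *
        ENNReal.ofReal
          (Real.sqrt (∑' k, if m < k then
            (if σ k = 0 then 0 else ‖a k‖ ^ 2 / σ k ^ 2) else 0)) := by
  set w : ℕ → ℝ := fun k => if σ k = 0 then 0 else ‖a k‖ ^ 2 / σ k ^ 2
  have hw : ∀ k, 0 ≤ w k := fun k => by simp only [w]; split_ifs <;> positivity
  have hW : ENNReal.ofReal √(∑' k, if m < k then w k else 0) =
      (∑' n, ENNReal.ofReal (w (n + (m + 1)))) ^ (1 / 2 : ℝ) := by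
    rw [Real.sqrt_eq_rpow, ← ENNReal.ofReal_rpow_of_nonneg (tsum_nonneg fun k => by
        split_ifs <;> simp [hw]) (by norm_num), tsum_ite_lt_eq_tsum_nat_add,
      ENNReal.ofReal_tsum_of_nonneg (fun n => hw _) ((summable_nat_add_iff (m + 1)).2 ha)]
  rw [hW, eLpNorm_exponent_top]
  refine eLpNormEssSup_le_of_ae_enorm_bound (.of_forall fun x => ?_)
  rw [← (ht x).tsum_eq]
  refine (enorm_tsum_mul_le (a := fun n => a (n + (m + 1))) (σ := fun n => σ (n + (m + 1)))
    (fun n => b (n + (m + 1)) x) fun n => ha0 _).trans ?_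
  gcongr
  rw [← tsum_ite_lt_eq_tsum_nat_add (fun k => ENNReal.ofReal (σ k ^ 2 * ‖b k x‖ ^ 2))]
  exact le_iSup (fun x => ∑' k, if m < k then ENNReal.ofReal (σ k ^ 2 * ‖b k x‖ ^ 2) else 0) x

end Tail

theorem stmt2_general {D : Type*} [MeasurableSpace D] (μ : Measure D)
    (bb : ℕ → D → ℂ) (σ : ℕ → ℝ)
    (hmeas : ∀ k, Measurable (bb k))
    (hON : ∀ j k, 1 ≤ j → 1 ≤ k →
      ∫ x, (starRingEnd ℂ) (bb j x) * bb k x ∂μ = if j = k then 1 else 0)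
    (hσ0 : σ 0 = 0)
    (hσsum : Summable fun k => σ k ^ 2)
    (m : ℕ)
    (f : D → ℂ) (a : ℕ → ℂ)
    (ha0 : ∀ k, σ k = 0 → a k = 0)
    (hrep : ∀ x, HasSum (fun k => a k * bb k x) (f x))
    (hfH : Summable fun k => if σ k = 0 then 0 else ‖a k‖ ^ 2 / σ k ^ 2)
    (A : (D → ℂ) → D → ℂ) (hA : ∀ g : D → ℂ, A g ∈ Vspan bb m) :
    eLpNorm (fun x => f x - A f x) ⊤ μ ≤
      (⨆ x : D, ∑' k, if m < k then ENNReal.ofReal (σ k ^ 2 * ‖bb k x‖ ^ 2) else 0)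
          ^ ((1:ℝ)/2) *
        ENNReal.ofReal
          (Real.sqrt (∑' k, if m < k then
            (if σ k = 0 then 0 else ‖a k‖ ^ 2 / σ k ^ 2) else 0)) +
      christoffel μ (Vspan bb m) * eLpNorm (fun x => f x - A f x) 2 μ := by
  have hbL2 : ∀ k, 1 ≤ k → MemLp (bb k) 2 μ := fun k hk =>
    memLp_two_of_integral_conj_mul_self_ne_zero (hmeas k).aestronglyMeasurable
      (by rw [hON k k hk hk, if_pos rfl]; exact one_ne_zero)
  -- `P_m f`; the index `0` in `range (m + 1)` contributes nothing since `a 0 = 0`.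
  set p : D → ℂ := ∑ k ∈ Finset.range (m + 1), a k • bb k
  have hp : p ∈ Vspan bb m := Submodule.sum_mem _ fun k hk => by
    rcases Nat.eq_zero_or_pos k with rfl | hk0
    · rw [ha0 0 hσ0, zero_smul]
      exact zero_mem _
    · have hkm : k ≤ m := Nat.lt_succ_iff.1 (Finset.mem_range.1 hk)
      exact Submodule.smul_mem _ _ (Submodule.subset_span ⟨k, ⟨hk0, hkm⟩, rfl⟩)
  have htail : ∀ x, HasSum (fun n => a (n + (m + 1)) * bb (n + (m + 1)) x) ((f - p) x) :=
    fun x => by simpa [p, Finset.sum_apply] using (hasSum_nat_add_iff' (m + 1)).2 (hrep x)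
  obtain ⟨ht2, horth⟩ := exists_memLp_tail_inner_eq_zero hbL2 hON
    ((summable_nat_add_iff (m + 1)).2 (summable_norm_sq_of_summable_div_sq ha0 hσsum hfH))
    htail
  have hg : p - A f ∈ Vspan bb m := sub_mem hp (hA f)
  have hg2 : MemLp (p - A f) 2 μ :=
    memLp_of_mem_span (by rintro _ ⟨k, hk, rfl⟩; exact hbL2 k hk.1) hg
  rw [show (fun x => f x - A f x) = (f - p) + (p - A f) from (sub_add_sub_cancel f p (A f)).symm]
  calc eLpNorm ((f - p) + (p - A f)) ⊤ μ ≤ eLpNorm (f - p) ⊤ μ + eLpNorm (p - A f) ⊤ μ :=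
        eLpNorm_add_le ht2.1 hg2.1 le_top
    _ ≤ eLpNorm (f - p) ⊤ μ + christoffel μ (Vspan bb m) * eLpNorm (p - A f) 2 μ := by
        gcongr
        exact eLpNorm_top_le_christoffel_mul hg hg2
    _ ≤ _ := by
        gcongr
        · exact eLpNorm_top_tail_le ha0 hfH htail
        · exact eLpNorm_two_le_eLpNorm_two_add ht2 hg2 (horth _ hg2 hg)

/-- **Lemma (lifting `L₂` bounds to `L_∞`, RKHS case).**
In the RKHS setting (orthonormal system `{b_k}_{k≥1}`, non-increasing square-summable
`σ ≥ 0`, bounded kernel `K(x,x) = ∑ σ_k²|b_k(x)|²`), for a function `f = ∑_{k≥1} a_k b_k`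
in `H` and any map `A` into `V_m`:
`‖f - A f‖_∞ ≤ (sup_x K_m(x,x))^{1/2} · ‖f - P_m f‖_H + Λ_m · ‖f - A f‖₂`,
where `‖f - P_m f‖_H² = ∑_{k>m} |a_k|²/σ_k²` and `K_m(x,x) = ∑_{k>m} σ_k²|b_k(x)|²`. -/
theorem stmt2 {D : Type*} [MeasurableSpace D] (μ : Measure D)
    (bb : ℕ → D → ℂ) (σ : ℕ → ℝ)
    (hmeas : ∀ k, Measurable (bb k))
    (hbdd : ∀ k, ∃ M : ℝ, ∀ x, ‖bb k x‖ ≤ M)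
    (hON : ∀ j k, 1 ≤ j → 1 ≤ k →
      ∫ x, (starRingEnd ℂ) (bb j x) * bb k x ∂μ = if j = k then 1 else 0)
    (hσ0 : σ 0 = 0) (hσnn : ∀ k, 0 ≤ σ k)
    (hσmono : ∀ j k, 1 ≤ j → j ≤ k → σ k ≤ σ j)
    (hσsum : Summable fun k => σ k ^ 2)
    (hKbdd : ∃ CK : ℝ, ∀ x,
      (∑' k, ENNReal.ofReal (σ k ^ 2 * ‖bb k x‖ ^ 2)) ≤ ENNReal.ofReal CK)
    (m : ℕ) (hm : 1 ≤ m)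
    (f : D → ℂ) (a : ℕ → ℂ)
    (ha0 : ∀ k, σ k = 0 → a k = 0)
    (hrep : ∀ x, HasSum (fun k => a k * bb k x) (f x))
    (hfH : Summable fun k => if σ k = 0 then 0 else ‖a k‖ ^ 2 / σ k ^ 2)
    (A : (D → ℂ) → D → ℂ) (hA : ∀ g : D → ℂ, A g ∈ Vspan bb m) :
    eLpNorm (fun x => f x - A f x) ⊤ μ ≤
      (⨆ x : D, ∑' k, if m < k then ENNReal.ofReal (σ k ^ 2 * ‖bb k x‖ ^ 2) else 0)
          ^ ((1:ℝ)/2) *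
        ENNReal.ofReal
          (Real.sqrt (∑' k, if m < k then
            (if σ k = 0 then 0 else ‖a k‖ ^ 2 / σ k ^ 2) else 0)) +
      christoffel μ (Vspan bb m) * eLpNorm (fun x => f x - A f x) 2 μ :=
  stmt2_general μ bb σ hmeas hON hσ0 hσsum m f a ha0 hrep hfH A hA
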